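/- arXiv:1612.08283 — 3 statements merged into one kernel-verified Lean document; each statement's English description precedes it below -/
import Mathlib

section
/- Let CT = CT(λ_0,…,λ_k) be a caterpillar of length k ≥ 1 and f an optimal independent broadcast on CT. Then at least one pendent neighbour of v_0 is an f-broadcast vertex, and at least one pendent neighbour of v_k is an f-broadcast vertex. -/
open SimpleGraph Finset
open scoped Classical

variable {V : Type*}

noncomputable def ecc [Fintype V] (G : SimpleGraph V) (v : V) : ℕ :=
  Finset.univ.sup (fun u => G.dist v u)

noncomputable def gdiam [Fintype V] (G : SimpleGraph V) : ℕ :=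
  Finset.univ.sup (fun v => ecc G v)

def IsIndepBroadcast [Fintype V] (G : SimpleGraph V) (f : V → ℕ) : Prop :=
  (∀ v, f v ≤ ecc G v) ∧
  ∀ u v, u ≠ v → 0 < f u → 0 < f v → max (f u) (f v) < G.dist u v

def cost [Fintype V] (f : V → ℕ) : ℕ := ∑ v, f v

noncomputable def betaB [Fintype V] (G : SimpleGraph V) : ℕ :=
  sSup {c | ∃ f, IsIndepBroadcast G f ∧ cost f = c}

abbrev CatV (k : ℕ) (lam : Fin (k+1) → ℕ) := Fin (k+1) ⊕ (Σ i : Fin (k+1), Fin (lam i))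

def caterpillar (k : ℕ) (lam : Fin (k+1) → ℕ) : SimpleGraph (CatV k lam) :=
  SimpleGraph.fromRel (fun u v => match u, v with
    | Sum.inl i, Sum.inl j => (i : ℕ) + 1 = (j : ℕ)
    | Sum.inl i, Sum.inr p => i = p.1
    | _, _ => False)

def numLeaves (k : ℕ) (lam : Fin (k+1) → ℕ) : ℕ := ∑ i, lam i

def numTrunks (k : ℕ) (lam : Fin (k+1) → ℕ) : ℕ :=
  (Finset.univ.filter (fun i : Fin (k+1) => lam i = 0)).card

def noAdjTrunks (k : ℕ) (lam : Fin (k+1) → ℕ) : Prop :=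
  ∀ i j : Fin (k+1), (i : ℕ) + 1 = (j : ℕ) → ¬(lam i = 0 ∧ lam j = 0)

def fstar (k : ℕ) (lam : Fin (k+1) → ℕ) (f : CatV k lam → ℕ) (i : Fin (k+1)) : ℕ :=
  f (Sum.inl i) + ∑ j, f (Sum.inr ⟨i, j⟩)

/-!
Suppose no leaf at an end `v_e` of the spine broadcasts. Take a broadcasting vertex `u` nearest
to `v_e` and move its broadcast to a leaf `l` at `v_e`, raising it by one. Since `v_e` is an end
of the spine, every other broadcasting vertex `w` satisfies `d(u, w) ≤ d(v_e, w) < d(l, w)`, so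
the new broadcast is still independent and costs one more, contradicting optimality. The move
fails only if `f u ≥ ecc l = k + 2 ≥ ecc u`; then `u` is the only broadcasting vertex and the
cost is at most `k + 2`, less than the cost `2k + 2` of broadcasting `k + 1` from a leaf at each
end.
-/

section Metric

variable {G : SimpleGraph V} {u v : V}

lemma SimpleGraph.Reachable.natDist_le_dist (φ : V → ℕ)
    (hφ : ∀ a b, G.Adj a b → Nat.dist (φ a) (φ b) ≤ 1) (h : G.Reachable u v) :
    Nat.dist (φ u) (φ v) ≤ G.dist u v := by
  obtain ⟨p, hp⟩ := h.exists_walk_length_eq_dist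
  rw [← hp]
  clear hp h
  induction p with
  | nil => simp
  | @cons a b c hadj p ih =>
    have := Nat.dist.triangle_inequality (φ a) (φ b) (φ c)
    have := hφ a b hadj
    rw [Walk.length_cons]
    omega

lemma dist_eq_dist_add_one_of_forall_adj_iff {l : V} (hl : ∀ y, G.Adj l y ↔ y = u)
    (hu : G.Reachable u v) (hv : v ≠ l) : G.dist l v = G.dist u v + 1 := by
  have hlu : G.Adj l u := (hl u).2 rfl
  refine le_antisymm ?_ ?_
  · have := hlu.reachable.dist_triangle_left v
    rw [dist_eq_one_iff_adj.2 hlu] at this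
    omega
  · obtain ⟨p, hp⟩ := (hlu.reachable.trans hu).exists_walk_length_eq_dist
    cases p with
    | nil => exact absurd rfl hv
    | cons hadj q =>
      obtain rfl := (hl _).1 hadj
      rw [← hp, Walk.length_cons]
      exact Nat.add_le_add_right (dist_le q) 1

end Metric

section Broadcast

variable {G : SimpleGraph V} {f : V → ℕ}

noncomputable def moveBroadcast (f : V → ℕ) (u l : V) : V → ℕ :=
  Function.update (Function.update f u 0) l (f u + 1)

lemma moveBroadcast_apply_of_ne {u l v : V} (hl : v ≠ l) (hu : v ≠ u) :
    moveBroadcast f u l v = f v := by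
  rw [moveBroadcast, Function.update_of_ne hl, Function.update_of_ne hu]

variable [Fintype V]

lemma dist_le_ecc (u v : V) : G.dist u v ≤ ecc G u :=
  Finset.le_sup (f := G.dist u) (mem_univ v)

lemma cost_update (g : V → ℕ) (a : V) (b : ℕ) :
    cost (Function.update g a b) + g a = cost g + b := by
  rw [cost, cost, sum_update_of_mem (mem_univ a), ← add_sum_erase _ g (mem_univ a),
    sdiff_singleton_eq_erase]
  ring

lemma cost_le_betaB (hf : IsIndepBroadcast G f) : cost f ≤ betaB G := by
  refine le_csSup ⟨∑ v, ecc G v, ?_⟩ ⟨f, hf, rfl⟩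
  rintro _ ⟨g, hg, rfl⟩
  exact sum_le_sum fun v _ => hg.1 v

lemma two_mul_dist_sub_one_le_betaB (a b : V) : 2 * (G.dist a b - 1) ≤ betaB G := by
  obtain rfl | hab := eq_or_ne a b
  · simp
  set m := G.dist a b - 1
  set g := Function.update (Function.update (0 : V → ℕ) a m) b m
  have hga : g a = m := by simp [g, hab]
  have hgb : g b = m := by simp [g]
  have hg_pos : ∀ v, 0 < g v → v = a ∨ v = b := by
    intro v hv
    by_contra! h
    simp [g, h.1, h.2] at hv
  have hg : IsIndepBroadcast G g := by
    refine ⟨fun v => ?_, fun u v huv hu hv => ?_⟩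
    · by_cases hv : 0 < g v
      · have hab_ecc : m ≤ ecc G a ∧ m ≤ ecc G b := by
          have := dist_le_ecc (G := G) a b
          have := dist_le_ecc (G := G) b a
          rw [SimpleGraph.dist_comm] at this
          omega
        rcases hg_pos v hv with rfl | rfl
        · rw [hga]; exact hab_ecc.1
        · rw [hgb]; exact hab_ecc.2
      · omega
    · rcases hg_pos u hu with rfl | rfl <;> rcases hg_pos v hv with rfl | rfl
      · exact absurd rfl huv
      · rw [hga, hgb] at *; omega
      · rw [hga, hgb, SimpleGraph.dist_comm] at *; omega
      · exact absurd rfl huv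
  have hcost : cost g = 2 * m := by
    have h1 := cost_update (Function.update (0 : V → ℕ) a m) b m
    have h2 := cost_update (0 : V → ℕ) a m
    simp only [Function.update_of_ne hab.symm, Pi.zero_apply, cost, sum_const_zero] at h1 h2
    simp only [cost, g]
    omega
  exact hcost ▸ cost_le_betaB hg

lemma IsIndepBroadcast.cost_eq_of_ecc_le (hf : IsIndepBroadcast G f) {u : V} (hu : 0 < f u)
    (h : ecc G u ≤ f u) : cost f = f u := by
  refine Fintype.sum_eq_single u fun w hw => ?_
  by_contra! hw'
  have := hf.2 u w hw.symm hu (Nat.pos_of_ne_zero hw')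
  have := dist_le_ecc (G := G) u w
  omega

lemma cost_moveBroadcast {u l : V} (hl : f l = 0) (hul : u ≠ l) :
    cost (moveBroadcast f u l) = cost f + 1 := by
  have h1 := cost_update (Function.update f u 0) l (f u + 1)
  have h2 := cost_update f u 0
  rw [Function.update_of_ne hul.symm, hl] at h1
  rw [moveBroadcast]; omega

lemma isIndepBroadcast_moveBroadcast (hf : IsIndepBroadcast G f) {u l : V} (hl : f l = 0)
    (hu : 0 < f u) (hecc : f u + 1 ≤ ecc G l)
    (hdist : ∀ w, w ≠ u → 0 < f w → G.dist u w < G.dist l w) :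
    IsIndepBroadcast G (moveBroadcast f u l) := by
  have hul : u ≠ l := by rintro rfl; omega
  have hl' : moveBroadcast f u l l = f u + 1 := by simp [moveBroadcast]
  have hu' : moveBroadcast f u l u = 0 := by simp [moveBroadcast, hul]
  have hpos : ∀ v, v ≠ l → 0 < moveBroadcast f u l v →
      v ≠ u ∧ moveBroadcast f u l v = f v := by
    intro v hvl hv
    have hvu : v ≠ u := by rintro rfl; omega
    exact ⟨hvu, moveBroadcast_apply_of_ne hvl hvu⟩
  have from_l : ∀ v, v ≠ l → 0 < moveBroadcast f u l v →
      max (moveBroadcast f u l l) (moveBroadcast f u l v) < G.dist l v := by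
    intro v hvl hv
    obtain ⟨hvu, hv'⟩ := hpos v hvl hv
    rw [hv'] at hv ⊢
    have := hf.2 u v hvu.symm hu hv
    have := hdist v hvu hv
    rw [hl']; omega
  refine ⟨fun v => ?_, fun x y hxy hx hy => ?_⟩
  · by_cases hvl : v = l
    · rwa [hvl, hl']
    by_cases hvu : v = u
    · rw [hvu, hu']; omega
    · rw [moveBroadcast_apply_of_ne hvl hvu]; exact hf.1 v
  by_cases hxl : x = l
  · subst hxl; exact from_l y (Ne.symm hxy) hy
  by_cases hyl : y = l
  · subst hyl; rw [max_comm, SimpleGraph.dist_comm]; exact from_l x hxy hx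
  obtain ⟨-, hx'⟩ := hpos x hxl hx
  obtain ⟨-, hy'⟩ := hpos y hyl hy
  rw [hx'] at hx ⊢
  rw [hy'] at hy ⊢
  exact hf.2 x y hxy hx hy

lemma exists_pos_forall_dist_le_of_cost_ne_zero (hf : cost f ≠ 0) (x : V) :
    ∃ u, 0 < f u ∧ ∀ w, 0 < f w → G.dist x u ≤ G.dist x w := by
  obtain ⟨v, -, hv⟩ := exists_ne_zero_of_sum_ne_zero hf
  obtain ⟨u, hu, hmin⟩ := (univ.filter (0 < f ·)).exists_min_image (G.dist x)
    ⟨v, by simpa [Nat.pos_iff_ne_zero] using hv⟩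
  exact ⟨u, (mem_filter.1 hu).2, fun w hw => hmin w (mem_filter.2 ⟨mem_univ w, hw⟩)⟩

end Broadcast

namespace Caterpillar

variable {k : ℕ} {lam : Fin (k+1) → ℕ}

@[simp] lemma adj_inl_inl {i j : Fin (k+1)} :
    (caterpillar k lam).Adj (Sum.inl i) (Sum.inl j) ↔
      (i : ℕ) + 1 = j ∨ (j : ℕ) + 1 = i := by
  simp only [caterpillar, fromRel_adj, ne_eq, Sum.inl.injEq]
  constructor
  · exact fun h => h.2
  · rintro h
    refine ⟨?_, h⟩
    rintro rfl
    omega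

@[simp] lemma adj_inl_inr {i : Fin (k+1)} {p : Σ i, Fin (lam i)} :
    (caterpillar k lam).Adj (Sum.inl i) (Sum.inr p) ↔ i = p.1 := by
  simp [caterpillar, fromRel_adj]

@[simp] lemma adj_inr_inl {i : Fin (k+1)} {p : Σ i, Fin (lam i)} :
    (caterpillar k lam).Adj (Sum.inr p) (Sum.inl i) ↔ i = p.1 := by
  simp [caterpillar, fromRel_adj]

@[simp] lemma not_adj_inr_inr {p q : Σ i, Fin (lam i)} :
    ¬ (caterpillar k lam).Adj (Sum.inr p) (Sum.inr q) := by
  simp [caterpillar, fromRel_adj]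

def pos : CatV k lam → ℕ := Sum.elim (fun i => i) (fun p => p.1)

def spineDist : CatV k lam → ℕ := Sum.elim (fun _ => 0) (fun _ => 1)

lemma pos_le (v : CatV k lam) : pos v ≤ k := by
  rcases v with i | ⟨i, t⟩ <;> simp only [pos, Sum.elim_inl, Sum.elim_inr] <;> omega

lemma spineDist_le_one (v : CatV k lam) : spineDist v ≤ 1 := by
  rcases v with i | p <;> simp [spineDist]

lemma exists_walk_inl_inl {i j : Fin (k+1)} (hij : (i : ℕ) ≤ j) :
    ∃ p : (caterpillar k lam).Walk (Sum.inl i) (Sum.inl j), p.length = j - i := by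
  obtain ⟨n, hn⟩ : ∃ n, (j : ℕ) = i + n := ⟨j - i, by omega⟩
  induction n generalizing j with
  | zero =>
    obtain rfl : j = i := Fin.ext (by omega)
    exact ⟨.nil, by simp⟩
  | succ n ih =>
    obtain ⟨p, hp⟩ := ih (j := ⟨i + n, by omega⟩) (by simp) rfl
    exact ⟨p.concat (by simp; omega), by simp [hp]; omega⟩

lemma connected : (caterpillar k lam).Connected := by
  have hreach : ∀ v, (caterpillar k lam).Reachable (Sum.inl 0) v := by
    have hspine (i : Fin (k+1)) : (caterpillar k lam).Reachable (Sum.inl 0) (Sum.inl i) :=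
      (exists_walk_inl_inl (Nat.zero_le _)).elim fun p _ => ⟨p⟩
    rintro (i | ⟨i, t⟩)
    · exact hspine i
    · exact (hspine i).trans (Adj.reachable (by simp))
  exact (connected_iff _).2 ⟨fun u v => (hreach u).symm.trans (hreach v), ⟨Sum.inl 0⟩⟩

lemma natDist_pos_le_dist (u v : CatV k lam) :
    Nat.dist (pos u) (pos v) ≤ (caterpillar k lam).dist u v := by
  refine (connected.preconnected u v).natDist_le_dist pos fun a b hab => ?_
  rcases a with i | p <;> rcases b with j | q <;> simp [pos, Nat.dist] at hab ⊢ <;> omega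

lemma dist_inl_inl (i j : Fin (k+1)) :
    (caterpillar k lam).dist (Sum.inl i) (Sum.inl j) = Nat.dist i j := by
  refine le_antisymm ?_ (natDist_pos_le_dist (Sum.inl i) (Sum.inl j))
  wlog hij : (i : ℕ) ≤ j generalizing i j
  · rw [SimpleGraph.dist_comm, Nat.dist_comm]
    exact this j i (by omega)
  obtain ⟨p, hp⟩ := exists_walk_inl_inl (lam := lam) hij
  calc _ ≤ p.length := dist_le p
    _ = Nat.dist i j := by rw [hp, Nat.dist_eq_sub_of_le hij]

lemma dist_inr (i : Fin (k+1)) (t : Fin (lam i)) {v : CatV k lam} (hv : v ≠ Sum.inr ⟨i, t⟩) :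
    (caterpillar k lam).dist (Sum.inr ⟨i, t⟩) v = (caterpillar k lam).dist (Sum.inl i) v + 1 :=
  dist_eq_dist_add_one_of_forall_adj_iff (by rintro (j | q) <;> simp [eq_comm]) (connected _ _) hv

lemma dist_inl (i : Fin (k+1)) (v : CatV k lam) :
    (caterpillar k lam).dist (Sum.inl i) v = Nat.dist i (pos v) + spineDist v := by
  rcases v with j | ⟨j, t⟩
  · simp [dist_inl_inl, pos, spineDist]
  · rw [SimpleGraph.dist_comm, dist_inr j t (by simp), SimpleGraph.dist_comm, dist_inl_inl]
    rfl

lemma dist_eq_of_ne {u v : CatV k lam} (h : u ≠ v) :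
    (caterpillar k lam).dist u v = Nat.dist (pos u) (pos v) + spineDist u + spineDist v := by
  rcases u with i | ⟨i, t⟩
  · simp [dist_inl, pos, spineDist]
  · rw [dist_inr i t h.symm, dist_inl]
    simp only [pos, spineDist, Sum.elim_inr]
    omega

lemma dist_le_add_two (u v : CatV k lam) : (caterpillar k lam).dist u v ≤ k + 2 := by
  obtain rfl | h := eq_or_ne u v
  · simp
  have := pos_le u; have := pos_le v
  have := spineDist_le_one u; have := spineDist_le_one v
  rw [dist_eq_of_ne h, Nat.dist]
  omega

lemma ecc_le (v : CatV k lam) : ecc (caterpillar k lam) v ≤ k + 2 :=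
  Finset.sup_le fun u _ => dist_le_add_two v u

lemma dist_inr_zero_inr_last (hk : 1 ≤ k) (t : Fin (lam 0)) (s : Fin (lam (Fin.last k))) :
    (caterpillar k lam).dist (Sum.inr ⟨0, t⟩) (Sum.inr ⟨Fin.last k, s⟩) = k + 2 := by
  rw [dist_eq_of_ne (by simp [Fin.ext_iff]; omega)]
  simp [pos, spineDist, Nat.dist]

variable {e : Fin (k+1)}

lemma two_mul_add_two_le_betaB (hk : 1 ≤ k) (h0 : 0 < lam 0) (hl : 0 < lam (Fin.last k)) :
    2 * k + 2 ≤ betaB (caterpillar k lam) := by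
  have := two_mul_dist_sub_one_le_betaB (G := caterpillar k lam)
    (Sum.inr ⟨0, ⟨0, h0⟩⟩) (Sum.inr ⟨Fin.last k, ⟨0, hl⟩⟩)
  rw [dist_inr_zero_inr_last hk] at this
  omega

lemma add_two_le_ecc_inr (hk : 1 ≤ k) (h0 : 0 < lam 0) (hl : 0 < lam (Fin.last k))
    (he : e = 0 ∨ e = Fin.last k) (t : Fin (lam e)) :
    k + 2 ≤ ecc (caterpillar k lam) (Sum.inr ⟨e, t⟩) := by
  rcases he with rfl | rfl
  · rw [← dist_inr_zero_inr_last hk t ⟨0, hl⟩]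
    exact dist_le_ecc _ _
  · rw [← dist_inr_zero_inr_last hk ⟨0, h0⟩ t, SimpleGraph.dist_comm]
    exact dist_le_ecc _ _

lemma spineDist_le_natDist {u : CatV k lam} (hu : ∀ t, u ≠ Sum.inr ⟨e, t⟩) :
    spineDist u ≤ Nat.dist e (pos u) := by
  rcases u with i | ⟨i, t⟩
  · simp [spineDist]
  · have : (i : ℕ) ≠ e := by
      rintro h
      obtain rfl := Fin.ext h
      exact hu t rfl
    simp only [spineDist, pos, Sum.elim_inr, Nat.dist]
    omega

lemma dist_le_dist_inl_of_dist_inl_le (he : e = 0 ∨ e = Fin.last k) {u w : CatV k lam}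
    (hu : ∀ t, u ≠ Sum.inr ⟨e, t⟩) (hw : ∀ t, w ≠ Sum.inr ⟨e, t⟩) (huw : u ≠ w)
    (h : (caterpillar k lam).dist (Sum.inl e) u ≤ (caterpillar k lam).dist (Sum.inl e) w) :
    (caterpillar k lam).dist u w ≤ (caterpillar k lam).dist (Sum.inl e) w := by
  have := spineDist_le_natDist hu; have := spineDist_le_natDist hw
  have := pos_le u; have := pos_le w
  rw [dist_inl, dist_inl] at h
  rw [dist_eq_of_ne huw, dist_inl]
  rcases he with rfl | rfl <;> simp only [Nat.dist, Fin.val_zero, Fin.val_last] at * <;> omega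

theorem exists_pos_inr_of_eq_zero_or_eq_last (hk : 1 ≤ k) (h0 : 0 < lam 0)
    (hl : 0 < lam (Fin.last k)) (he : e = 0 ∨ e = Fin.last k) {f : CatV k lam → ℕ}
    (hf : IsIndepBroadcast (caterpillar k lam) f) (hopt : cost f = betaB (caterpillar k lam)) :
    ∃ j : Fin (lam e), 0 < f (Sum.inr ⟨e, j⟩) := by
  by_contra! hno
  replace hno : ∀ j, f (Sum.inr ⟨e, j⟩) = 0 := fun j => Nat.le_zero.1 (hno j)
  have not_leaf : ∀ {w}, 0 < f w → ∀ t, w ≠ Sum.inr ⟨e, t⟩ := by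
    rintro w hw t rfl
    rw [hno] at hw
    exact hw.false
  have hcost : 2 * k + 2 ≤ cost f := (two_mul_add_two_le_betaB hk h0 hl).trans hopt.ge
  obtain ⟨u, hu, hu_min⟩ := exists_pos_forall_dist_le_of_cost_ne_zero
    (G := caterpillar k lam) (f := f) (by omega) (Sum.inl e)
  have hlam : 0 < lam e := by rcases he with rfl | rfl <;> assumption
  set l : CatV k lam := Sum.inr ⟨e, ⟨0, hlam⟩⟩
  by_cases hecc : f u + 1 ≤ ecc (caterpillar k lam) l
  · have hdist : ∀ w, w ≠ u → 0 < f w →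
        (caterpillar k lam).dist u w < (caterpillar k lam).dist l w := by
      intro w hwu hw
      rw [dist_inr _ _ (not_leaf hw _)]
      have := dist_le_dist_inl_of_dist_inl_le he (not_leaf hu) (not_leaf hw) hwu.symm
        (hu_min w hw)
      omega
    have := cost_le_betaB (isIndepBroadcast_moveBroadcast hf (hno _) hu hecc hdist)
    rw [cost_moveBroadcast (hno _) (not_leaf hu _)] at this
    omega
  · have hu_ecc : ecc (caterpillar k lam) u ≤ f u :=
      calc _ ≤ k + 2 := ecc_le u
        _ ≤ ecc (caterpillar k lam) l := add_two_le_ecc_inr hk h0 hl he _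
        _ ≤ f u := by omega
    have hcost_u := hf.cost_eq_of_ecc_le hu hu_ecc
    have hfu := (hf.1 u).trans (ecc_le u)
    omega

end Caterpillar

theorem stmt8 (k : ℕ) (hk : 1 ≤ k) (lam : Fin (k+1) → ℕ)
    (h0 : 0 < lam 0) (hl : 0 < lam (Fin.last k))
    (f : CatV k lam → ℕ) (hf : IsIndepBroadcast (caterpillar k lam) f)
    (hopt : cost f = betaB (caterpillar k lam)) :
    (∃ j : Fin (lam 0), 0 < f (Sum.inr ⟨0, j⟩)) ∧
    (∃ j : Fin (lam (Fin.last k)), 0 < f (Sum.inr ⟨Fin.last k, j⟩)) :=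
  ⟨Caterpillar.exists_pos_inr_of_eq_zero_or_eq_last hk h0 hl (Or.inl rfl) hf hopt,
    Caterpillar.exists_pos_inr_of_eq_zero_or_eq_last hk h0 hl (Or.inr rfl) hf hopt⟩
end

section
/- For every caterpillar CT of length k ≥ 1 with no pair of adjacent trunks, the broadcast independence number satisfies β_b(CT) ≥ λ(CT) + τ(CT), where λ(CT) is the number of leaves and τ(CT) the number of trunks. -/
open SimpleGraph Finset
open scoped Classical

variable {V : Type*}

section aux
variable (k : ℕ) (lam : Fin (k+1) → ℕ)

lemma cat_adj_spine {i j : Fin (k+1)} (h : (i:ℕ)+1 = j) :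
    (caterpillar k lam).Adj (Sum.inl i) (Sum.inl j) := by
  rw [caterpillar, fromRel_adj]
  exact ⟨by simp [Fin.ext_iff]; omega, Or.inl h⟩

lemma cat_adj_leaf (p : Σ i : Fin (k+1), Fin (lam i)) :
    (caterpillar k lam).Adj (Sum.inl p.1) (Sum.inr p) := by
  rw [caterpillar, fromRel_adj]
  exact ⟨by simp, Or.inl rfl⟩

lemma cat_adj_inl_inl {i j : Fin (k+1)}
    (h : (caterpillar k lam).Adj (Sum.inl i) (Sum.inl j)) :
    (i:ℕ)+1 = j ∨ (j:ℕ)+1 = i := by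
  rw [caterpillar, fromRel_adj] at h
  rcases h with ⟨-, h | h⟩
  · exact Or.inl h
  · exact Or.inr h

lemma cat_adj_inl_inr {i : Fin (k+1)} {p : Σ i : Fin (k+1), Fin (lam i)}
    (h : (caterpillar k lam).Adj (Sum.inl i) (Sum.inr p)) : i = p.1 := by
  rw [caterpillar, fromRel_adj] at h
  rcases h with ⟨-, h | h⟩
  · exact h
  · exact h.elim

lemma cat_adj_inr_inr {p q : Σ i : Fin (k+1), Fin (lam i)}
    (h : (caterpillar k lam).Adj (Sum.inr p) (Sum.inr q)) : False := by
  rw [caterpillar, fromRel_adj] at h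
  rcases h with ⟨-, h | h⟩ <;> exact h

lemma cat_reach_spine : ∀ n : ℕ, (h : n < k+1) →
    (caterpillar k lam).Reachable (Sum.inl 0) (Sum.inl ⟨n, h⟩) := by
  intro n
  induction n with
  | zero => intro h; exact Reachable.refl _
  | succ m ih =>
      intro h
      exact (ih (by omega)).trans
        (cat_adj_spine k lam (i := ⟨m, by omega⟩) (j := ⟨m+1, h⟩) rfl).reachable

lemma cat_reach (v : CatV k lam) : (caterpillar k lam).Reachable (Sum.inl 0) v := by
  rcases v with i | p
  · have := cat_reach_spine k lam i.val i.isLt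
    simpa using this
  · exact (cat_reach_spine k lam p.1.val p.1.isLt).trans
      (by simpa using (cat_adj_leaf k lam p).reachable)

lemma cat_ecc_pos {v u : CatV k lam} (h : (caterpillar k lam).Adj v u) :
    1 ≤ ecc (caterpillar k lam) v := by
  have h1 : (caterpillar k lam).dist v u = 1 := dist_eq_one_iff_adj.mpr h
  calc (1:ℕ) = (caterpillar k lam).dist v u := h1.symm
    _ ≤ _ := Finset.le_sup (Finset.mem_univ u)

end aux

theorem stmt11 (k : ℕ) (hk : 1 ≤ k) (lam : Fin (k+1) → ℕ)
    (h0 : 0 < lam 0) (hl : 0 < lam (Fin.last k))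
    (htr : noAdjTrunks k lam) :
    numLeaves k lam + numTrunks k lam ≤ betaB (caterpillar k lam) := by
  set G := caterpillar k lam with hG
  -- the broadcast: 1 on trunks and leaves, 0 on stems
  set f : CatV k lam → ℕ := fun v => match v with
    | Sum.inl i => if lam i = 0 then 1 else 0
    | Sum.inr _ => 1 with hf
  -- positivity characterization
  have fpos : ∀ v, 0 < f v → f v = 1 := by
    rintro (i | p) h
    · simp only [hf] at h ⊢; split at h <;> simp_all
    · rfl
  have ftrunk : ∀ i : Fin (k+1), 0 < f (Sum.inl i) → lam i = 0 := by
    intro i h; simp only [hf] at h; split at h <;> simp_all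
  -- f is an independent broadcast
  have hIB : IsIndepBroadcast G f := by
    constructor
    · rintro (i | p)
      · by_cases hi : lam i = 0
        · have hik : (i : ℕ) < k := by
            rcases Nat.lt_or_ge (i : ℕ) k with h | h
            · exact h
            · exfalso
              have : i = Fin.last k := by
                apply Fin.ext; simp [Fin.last]; omega
              rw [this] at hi; omega
          have hadj : G.Adj (Sum.inl i) (Sum.inl ⟨(i:ℕ)+1, by omega⟩) :=
            cat_adj_spine k lam rfl
          calc f (Sum.inl i) ≤ 1 := by simp [hf, hi]
            _ ≤ _ := cat_ecc_pos k lam hadj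
        · simp [hf, hi]
      · have hadj : G.Adj (Sum.inr p) (Sum.inl p.1) := (cat_adj_leaf k lam p).symm
        calc f (Sum.inr p) = 1 := rfl
          _ ≤ _ := cat_ecc_pos k lam hadj
    · intro u v hne hu hv
      have hmax : max (f u) (f v) = 1 := by rw [fpos u hu, fpos v hv, max_self]
      rw [hmax]
      -- u and v are not adjacent
      have hnadj : ¬ G.Adj u v := by
        intro hadj
        rcases u with i | p <;> rcases v with j | q
        · have hi := ftrunk i hu
          have hj := ftrunk j hv
          rcases cat_adj_inl_inl k lam hadj with h | h
          · exact htr i j h ⟨hi, hj⟩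
          · exact htr j i h ⟨hj, hi⟩
        · have hi := ftrunk i hu
          have heq := cat_adj_inl_inr k lam hadj
          have h2 := q.2.isLt
          have h3 : lam q.1 = 0 := heq ▸ hi
          omega
        · have hj := ftrunk j hv
          have heq := cat_adj_inl_inr k lam hadj.symm
          have h2 := p.2.isLt
          have h3 : lam p.1 = 0 := heq ▸ hj
          omega
        · exact cat_adj_inr_inr k lam hadj
      have hreach : G.Reachable u v := (cat_reach k lam u).symm.trans (cat_reach k lam v)
      have hpos : 0 < G.dist u v := hreach.pos_dist_of_ne hne
      have hne1 : G.dist u v ≠ 1 := fun h => hnadj (dist_eq_one_iff_adj.mp h)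
      omega
  -- cost of f
  have hcost : cost f = numTrunks k lam + numLeaves k lam := by
    rw [cost, Fintype.sum_sum_type]
    congr 1
    · simp only [hf]
      rw [Finset.sum_boole]
      simp [numTrunks]
    · simp only [hf]
      rw [Finset.sum_const, Finset.card_univ, Fintype.card_sigma]
      simp [numLeaves]
  -- bounded above
  have hbdd : BddAbove {c | ∃ g, IsIndepBroadcast G g ∧ cost g = c} := by
    refine ⟨∑ v, ecc G v, ?_⟩
    rintro c ⟨g, hg, rfl⟩
    exact Finset.sum_le_sum fun v _ => hg.1 v
  have hmem : cost f ∈ {c | ∃ g, IsIndepBroadcast G g ∧ cost g = c} := ⟨f, hIB, rfl⟩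
  calc numLeaves k lam + numTrunks k lam = cost f := by rw [hcost]; ring
    _ ≤ betaB G := le_csSup hbdd hmem
end

section
/- Let CT be a caterpillar of length k ≥ 1 having no trunk and no stem with three or more pendent neighbours (i.e., every spine vertex has one or two leaf neighbours). Then β_b(CT) = 2k + 2 = 2(diam(CT) − 1). -/
open SimpleGraph Finset
open scoped Classical

variable {V : Type*}

section Aux
variable {k : ℕ} {lam : Fin (k+1) → ℕ}

/-- spine coordinate -/
def xc : CatV k lam → ℕ := Sum.elim Fin.val (fun p => (p.1 : ℕ))

/-- leaf indicator -/
def tt : CatV k lam → ℕ := Sum.elim (fun _ => 0) (fun _ => 1)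

lemma adj_spine {i j : Fin (k+1)} (h : (i:ℕ) + 1 = j) :
    (caterpillar k lam).Adj (Sum.inl i) (Sum.inl j) := by
  rw [caterpillar, SimpleGraph.fromRel_adj]
  refine ⟨by simp [Fin.ext_iff]; omega, Or.inl h⟩

lemma adj_leaf (i : Fin (k+1)) (a : Fin (lam i)) :
    (caterpillar k lam).Adj (Sum.inl i) (Sum.inr ⟨i, a⟩) := by
  rw [caterpillar, SimpleGraph.fromRel_adj]
  exact ⟨by simp, Or.inl rfl⟩

lemma adj_xc {u v : CatV k lam} (h : (caterpillar k lam).Adj u v) :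
    Nat.dist (xc u) (xc v) ≤ 1 := by
  rw [caterpillar, SimpleGraph.fromRel_adj] at h
  obtain ⟨-, h | h⟩ := h <;>
  · rcases u with i | p <;> rcases v with j | q <;> simp_all [xc, Nat.dist] <;> omega

lemma adj_inr {p : Σ i : Fin (k+1), Fin (lam i)} {v : CatV k lam}
    (h : (caterpillar k lam).Adj (Sum.inr p) v) : v = Sum.inl p.1 := by
  rw [caterpillar, SimpleGraph.fromRel_adj] at h
  obtain ⟨-, h | h⟩ := h
  · rcases v with j | q <;> simp_all
  · rcases v with j | q <;> simp_all

lemma walk_xc {u v : CatV k lam} (w : (caterpillar k lam).Walk u v) :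
    Nat.dist (xc u) (xc v) ≤ w.length := by
  induction w with
  | nil => simp
  | cons h w ih =>
      rename_i a b c
      calc Nat.dist (xc a) (xc c) ≤ Nat.dist (xc a) (xc b) + Nat.dist (xc b) (xc c) :=
            Nat.dist.triangle_inequality _ _ _
        _ ≤ 1 + w.length := Nat.add_le_add (adj_xc h) ih
      simp [SimpleGraph.Walk.length_cons]; omega

lemma spine_walk : ∀ (n : ℕ) (i j : Fin (k+1)), (j:ℕ) = (i:ℕ) + n →
    ∃ w : (caterpillar k lam).Walk (Sum.inl i) (Sum.inl j), w.length = n := by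
  intro n
  induction n with
  | zero =>
      intro i j h
      have : i = j := by rw [Fin.ext_iff]; omega
      subst this
      exact ⟨SimpleGraph.Walk.nil, rfl⟩
  | succ n ih =>
      intro i j h
      have hj : (i:ℕ) + n ≤ k := by have := j.isLt; omega
      set j' : Fin (k+1) := ⟨(i:ℕ) + n, by omega⟩ with hj'
      obtain ⟨w, hw⟩ := ih i j' rfl
      have ha : (caterpillar k lam).Adj (Sum.inl j') (Sum.inl j) :=
        adj_spine (by simp [hj']; omega)
      exact ⟨w.concat ha, by simp [SimpleGraph.Walk.length_concat, hw]⟩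

lemma dist_spine_le (i j : Fin (k+1)) :
    (caterpillar k lam).dist (Sum.inl i) (Sum.inl j) ≤ Nat.dist i j := by
  rcases le_total (i:ℕ) (j:ℕ) with h | h
  · obtain ⟨w, hw⟩ := spine_walk ((j:ℕ) - i) i j (by omega)
    calc (caterpillar k lam).dist _ _ ≤ w.length := SimpleGraph.dist_le w
      _ = Nat.dist i j := by rw [hw, Nat.dist_eq_sub_of_le h]
  · obtain ⟨w, hw⟩ := spine_walk ((i:ℕ) - j) j i (by omega)
    rw [SimpleGraph.dist_comm]
    calc (caterpillar k lam).dist _ _ ≤ w.length := SimpleGraph.dist_le w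
      _ = Nat.dist i j := by rw [hw, Nat.dist_comm, Nat.dist_eq_sub_of_le h]

lemma cat_connected : (caterpillar k lam).Connected := by
  have hreach : ∀ v : CatV k lam, (caterpillar k lam).Reachable v (Sum.inl 0) := by
    have hs : ∀ i : Fin (k+1), (caterpillar k lam).Reachable (Sum.inl i) (Sum.inl 0) := by
      intro i
      obtain ⟨w, -⟩ := spine_walk (k := k) (lam := lam) (i:ℕ) 0 i (by simp)
      exact ⟨w.reverse⟩
    intro v
    rcases v with i | p
    · exact hs i
    · exact ((adj_leaf p.1 p.2).symm.reachable).trans (hs p.1)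
  rw [SimpleGraph.connected_iff]
  exact ⟨fun u v => (hreach u).trans (hreach v).symm, ⟨Sum.inl 0⟩⟩

lemma dist_ge_xc (u v : CatV k lam) :
    Nat.dist (xc u) (xc v) ≤ (caterpillar k lam).dist u v := by
  obtain ⟨w, hw⟩ := (cat_connected (k := k) (lam := lam)).exists_walk_length_eq_dist u v
  rw [← hw]; exact walk_xc w

lemma dist_spine_spine (i j : Fin (k+1)) :
    (caterpillar k lam).dist (Sum.inl i) (Sum.inl j) = Nat.dist i j := by
  refine le_antisymm (dist_spine_le i j) ?_
  simpa [xc] using dist_ge_xc (lam := lam) (Sum.inl i) (Sum.inl j)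

lemma leaf_dist (p : Σ i : Fin (k+1), Fin (lam i)) (v : CatV k lam)
    (h : v ≠ Sum.inr p) :
    (caterpillar k lam).dist v (Sum.inr p) =
      (caterpillar k lam).dist v (Sum.inl p.1) + 1 := by
  have hconn := cat_connected (k := k) (lam := lam)
  have hadj : (caterpillar k lam).Adj (Sum.inl p.1) (Sum.inr p) := adj_leaf p.1 p.2
  apply le_antisymm
  · calc (caterpillar k lam).dist v (Sum.inr p)
        ≤ (caterpillar k lam).dist v (Sum.inl p.1) +
          (caterpillar k lam).dist (Sum.inl p.1) (Sum.inr p) := hconn.dist_triangle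
      _ = (caterpillar k lam).dist v (Sum.inl p.1) + 1 := by
          rw [SimpleGraph.dist_eq_one_iff_adj.mpr hadj]
  · obtain ⟨w, hw⟩ := hconn.exists_walk_length_eq_dist v (Sum.inr p)
    have hw' : w.reverse.length = (caterpillar k lam).dist v (Sum.inr p) := by
      rw [SimpleGraph.Walk.length_reverse, hw]
    generalize hrev : w.reverse = w'
    rw [hrev] at hw'
    cases w' with
    | nil => exact absurd rfl h
    | cons ha q =>
        rename_i b
        have hb : b = Sum.inl p.1 := adj_inr ha
        subst hb
        have : (caterpillar k lam).dist v (Sum.inl p.1) ≤ q.length := by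
          rw [SimpleGraph.dist_comm]; exact SimpleGraph.dist_le q
        rw [SimpleGraph.Walk.length_cons] at hw'
        omega

lemma dist_spine_leaf (i : Fin (k+1)) (p : Σ i : Fin (k+1), Fin (lam i)) :
    (caterpillar k lam).dist (Sum.inl i) (Sum.inr p) = Nat.dist i p.1 + 1 := by
  rw [leaf_dist p _ (by simp), dist_spine_spine]

lemma dist_leaf_leaf (p q : Σ i : Fin (k+1), Fin (lam i)) (h : p ≠ q) :
    (caterpillar k lam).dist (Sum.inr p) (Sum.inr q) = Nat.dist p.1 q.1 + 2 := by
  rw [leaf_dist q _ (by simpa using h), SimpleGraph.dist_comm, dist_spine_leaf]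
  rw [Nat.dist_comm]

lemma dist_le_k2 (u v : CatV k lam) : (caterpillar k lam).dist u v ≤ k + 2 := by
  have hd : ∀ i j : Fin (k+1), Nat.dist (i:ℕ) (j:ℕ) ≤ k := by
    intro i j
    have := i.isLt; have := j.isLt
    simp [Nat.dist]; omega
  rcases u with i | p <;> rcases v with j | q
  · rw [dist_spine_spine]; have := hd i j; omega
  · rw [dist_spine_leaf]; have := hd i q.1; omega
  · rw [SimpleGraph.dist_comm, dist_spine_leaf]; have := hd j p.1; omega
  · by_cases h : p = q
    · subst h; rw [SimpleGraph.dist_self]; omega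
    · rw [dist_leaf_leaf p q h]; have := hd p.1 q.1; omega

lemma ecc_le_k2 (v : CatV k lam) : ecc (caterpillar k lam) v ≤ k + 2 :=
  Finset.sup_le fun u _ => dist_le_k2 v u

lemma ecc_leaf_ge (hk : 1 ≤ k) (p : Σ i : Fin (k+1), Fin (lam i)) :
    2 ≤ ecc (caterpillar k lam) (Sum.inr p) := by
  set j : Fin (k+1) := if (p.1 : ℕ) = 0 then ⟨1, by omega⟩ else ⟨0, by omega⟩ with hj
  have hne : Nat.dist (j : ℕ) (p.1 : ℕ) ≠ 0 := by
    rw [hj]; split <;> simp_all [Nat.dist] <;> omega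
  have : (caterpillar k lam).dist (Sum.inr p) (Sum.inl j) = Nat.dist j p.1 + 1 := by
    rw [SimpleGraph.dist_comm, dist_spine_leaf]
  calc 2 ≤ (caterpillar k lam).dist (Sum.inr p) (Sum.inl j) := by omega
    _ ≤ _ := Finset.le_sup (Finset.mem_univ _)

lemma gdiam_eq (hk : 1 ≤ k) (hlam : ∀ i, 1 ≤ lam i) :
    gdiam (caterpillar k lam) = k + 2 := by
  apply le_antisymm
  · exact Finset.sup_le fun v _ => ecc_le_k2 v
  · set p : Σ i : Fin (k+1), Fin (lam i) := ⟨0, ⟨0, hlam 0⟩⟩ with hp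
    set q : Σ i : Fin (k+1), Fin (lam i) := ⟨Fin.last k, ⟨0, hlam _⟩⟩ with hq
    have hpq : p ≠ q := by
      intro h
      have : (0 : Fin (k+1)) = Fin.last k := congrArg Sigma.fst h
      rw [Fin.ext_iff] at this
      simp [Fin.last] at this; omega
    have hdist : (caterpillar k lam).dist (Sum.inr p) (Sum.inr q) = k + 2 := by
      rw [dist_leaf_leaf p q hpq]
      simp [hp, hq, Nat.dist, Fin.last]
    calc k + 2 = (caterpillar k lam).dist (Sum.inr p) (Sum.inr q) := hdist.symm
      _ ≤ ecc (caterpillar k lam) (Sum.inr p) := Finset.le_sup (Finset.mem_univ _)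
      _ ≤ gdiam (caterpillar k lam) := Finset.le_sup (Finset.mem_univ _)

/-- the explicit broadcast: value 2 on the first leaf of each spine vertex -/
def f0 (k : ℕ) (lam : Fin (k+1) → ℕ) : CatV k lam → ℕ :=
  fun v => match v with
  | Sum.inl _ => 0
  | Sum.inr p => if (p.2 : ℕ) = 0 then 2 else 0

lemma f0_indep (hk : 1 ≤ k) : IsIndepBroadcast (caterpillar k lam) (f0 k lam) := by
  constructor
  · intro v
    rcases v with i | p
    · simp [f0]
    · by_cases h : (p.2 : ℕ) = 0
      · simp only [f0, h, if_pos]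
        exact ecc_leaf_ge hk p
      · simp [f0, h]
  · intro u v huv hu hv
    rcases u with i | p
    · simp [f0] at hu
    rcases v with j | q
    · simp [f0] at hv
    have hp : (p.2 : ℕ) = 0 := by by_contra h; simp [f0, h] at hu
    have hq : (q.2 : ℕ) = 0 := by by_contra h; simp [f0, h] at hv
    have hpq : p ≠ q := by intro h; exact huv (by rw [h])
    have hij : p.1 ≠ q.1 := by
      intro h
      apply hpq
      obtain ⟨i, a⟩ := p; obtain ⟨j, b⟩ := q
      simp only at h
      subst h
      simp only [Sigma.mk.inj_iff, heq_eq_eq, true_and]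
      exact Fin.ext (by simp_all)
    have hd : 1 ≤ Nat.dist (p.1 : ℕ) (q.1 : ℕ) := by
      have : (p.1 : ℕ) ≠ (q.1 : ℕ) := fun h => hij (Fin.ext h)
      simp [Nat.dist]; omega
    rw [dist_leaf_leaf p q hpq]
    simp [f0, hp, hq]
    omega

lemma f0_cost (hlam : ∀ i, 1 ≤ lam i) : cost (f0 k lam) = 2 * k + 2 := by
  unfold cost
  rw [Fintype.sum_sum_type]
  have h1 : ∑ i : Fin (k+1), f0 k lam (Sum.inl i) = 0 := by simp [f0]
  have h2 : ∑ p : Σ i : Fin (k+1), Fin (lam i), f0 k lam (Sum.inr p) = 2 * (k + 1) := by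
    rw [← Finset.univ_sigma_univ, Finset.sum_sigma]
    have : ∀ i : Fin (k+1), ∑ a : Fin (lam i), f0 k lam (Sum.inr ⟨i, a⟩) = 2 := by
      intro i
      have hz : (0 : ℕ) < lam i := hlam i
      have : ∀ a : Fin (lam i), f0 k lam (Sum.inr ⟨i, a⟩) =
          if a = (⟨0, hz⟩ : Fin (lam i)) then 2 else 0 := by
        intro a
        simp [f0, Fin.ext_iff]
      simp only [this]
      rw [Finset.sum_ite_eq' Finset.univ]
      simp
    simp only [this]
    simp [mul_comm]
  omega

/-- The uniform distance formula. -/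
lemma dist_formula {u v : CatV k lam} (h : u ≠ v) :
    (caterpillar k lam).dist u v = Nat.dist (xc u) (xc v) + tt u + tt v := by
  rcases u with i | p <;> rcases v with j | q
  · rw [dist_spine_spine]; simp [xc, tt]
  · rw [dist_spine_leaf]; simp [xc, tt]
  · rw [SimpleGraph.dist_comm, dist_spine_leaf]; simp [xc, tt, Nat.dist_comm]
  · rw [dist_leaf_leaf p q (by simpa using h)]; simp [xc, tt]

section UB

/-- block lemma: if the total f-value at spine position i is positive, there is a
positive vertex at position i carrying (almost) all of it. -/
lemma block_rep (hlam : ∀ i, 1 ≤ lam i ∧ lam i ≤ 2) (f : CatV k lam → ℕ)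
    (hf : IsIndepBroadcast (caterpillar k lam) f)
    (i : Fin (k+1)) (hFi : 0 < fstar k lam f i) :
    ∃ v : CatV k lam, 0 < f v ∧ xc v = (i : ℕ) ∧ fstar k lam f i ≤ max (f v) 2 := by
  classical
  by_cases hs : 0 < f (Sum.inl i)
  · -- spine positive → all its leaves are zero
    have hleaf : ∀ a : Fin (lam i), f (Sum.inr ⟨i, a⟩) = 0 := by
      intro a
      by_contra h
      have ha : 0 < f (Sum.inr ⟨i, a⟩) := Nat.pos_of_ne_zero h
      have hne : (Sum.inl i : CatV k lam) ≠ Sum.inr ⟨i, a⟩ := by simp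
      have := hf.2 _ _ hne hs ha
      rw [dist_formula hne] at this
      simp [xc, tt, Nat.dist_self] at this
      omega
    refine ⟨Sum.inl i, hs, rfl, ?_⟩
    have : fstar k lam f i = f (Sum.inl i) := by
      unfold fstar; simp [hleaf]
    rw [this]; exact le_max_left _ _
  · -- spine zero
    have hs0 : f (Sum.inl i) = 0 := by omega
    set T : Finset (Fin (lam i)) := Finset.univ.filter (fun a => 0 < f (Sum.inr ⟨i, a⟩))
      with hT
    have hsumT : ∑ a : Fin (lam i), f (Sum.inr ⟨i, a⟩) = ∑ a ∈ T, f (Sum.inr ⟨i, a⟩) := by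
      symm
      apply Finset.sum_subset (Finset.subset_univ T)
      intro a _ ha
      simp [hT] at ha
      omega
    have hFi' : fstar k lam f i = ∑ a ∈ T, f (Sum.inr ⟨i, a⟩) := by
      unfold fstar; rw [hs0, hsumT]; omega
    have hTne : T.Nonempty := by
      by_contra h
      rw [Finset.not_nonempty_iff_eq_empty] at h
      rw [hFi', h] at hFi
      simp at hFi
    rcases Nat.lt_or_ge T.card 2 with hc | hc
    · -- exactly one positive leaf
      have hc1 : T.card = 1 := by
        have := Finset.card_pos.mpr hTne
        omega
      obtain ⟨a, ha⟩ := Finset.card_eq_one.mp hc1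
      have haT : a ∈ T := by rw [ha]; exact Finset.mem_singleton_self a
      have hpa : 0 < f (Sum.inr ⟨i, a⟩) := by simp [hT] at haT; exact haT
      refine ⟨Sum.inr ⟨i, a⟩, hpa, rfl, ?_⟩
      rw [hFi', ha, Finset.sum_singleton]
      exact le_max_left _ _
    · -- at least two positive leaves: each has f-value 1
      have hone : ∀ a ∈ T, f (Sum.inr ⟨i, a⟩) = 1 := by
        intro a haT
        obtain ⟨b, hbT, hba⟩ := Finset.exists_mem_ne hc a
        have hpa : 0 < f (Sum.inr ⟨i, a⟩) := by simp [hT] at haT; exact haT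
        have hpb : 0 < f (Sum.inr ⟨i, b⟩) := by simp [hT] at hbT; exact hbT
        have hne : (Sum.inr ⟨i, b⟩ : CatV k lam) ≠ Sum.inr ⟨i, a⟩ := by
          simp [hba]
        have := hf.2 _ _ hne hpb hpa
        rw [dist_formula hne] at this
        simp [xc, tt, Nat.dist_self] at this
        omega
      obtain ⟨a, haT⟩ := hTne
      have hpa : 0 < f (Sum.inr ⟨i, a⟩) := by simp [hT] at haT; exact haT
      refine ⟨Sum.inr ⟨i, a⟩, hpa, rfl, ?_⟩
      have : ∑ a ∈ T, f (Sum.inr ⟨i, a⟩) = T.card := by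
        rw [Finset.sum_congr rfl hone]; simp
      rw [hFi', this]
      have hTcard : T.card ≤ lam i := by
        calc T.card ≤ (Finset.univ : Finset (Fin (lam i))).card := Finset.card_le_card
              (Finset.subset_univ T)
          _ = lam i := by simp
      have := (hlam i).2
      exact le_max_of_le_right (by omega)

/-- pairwise bound between blocks -/
lemma block_pair (hlam : ∀ i, 1 ≤ lam i ∧ lam i ≤ 2) (f : CatV k lam → ℕ)
    (hf : IsIndepBroadcast (caterpillar k lam) f) {i j : Fin (k+1)} (hij : i ≠ j)
    (hFi : 0 < fstar k lam f i) (hFj : 0 < fstar k lam f j) :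
    fstar k lam f i + fstar k lam f j ≤ 2 * Nat.dist (i:ℕ) (j:ℕ) + 2 ∧
    fstar k lam f j ≤ 2 * Nat.dist (i:ℕ) (j:ℕ) := by
  obtain ⟨u, hu, hxu, hFu⟩ := block_rep hlam f hf i hFi
  obtain ⟨v, hv, hxv, hFv⟩ := block_rep hlam f hf j hFj
  have hD : 1 ≤ Nat.dist (i:ℕ) (j:ℕ) := by
    have : (i:ℕ) ≠ (j:ℕ) := fun h => hij (Fin.ext h)
    simp [Nat.dist]; omega
  have huv : u ≠ v := by
    intro h; rw [h, hxv] at hxu; exact hij (Fin.ext hxu.symm)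
  have hmax := hf.2 u v huv hu hv
  rw [dist_formula huv, hxu, hxv] at hmax
  have htu : tt u ≤ 1 := by rcases u with _ | _ <;> simp [tt]
  have htv : tt v ≤ 1 := by rcases v with _ | _ <;> simp [tt]
  set D := Nat.dist (i:ℕ) (j:ℕ)
  have hfu : f u ≤ D + 1 := by omega
  have hfv : f v ≤ D + 1 := by omega
  have h1 : fstar k lam f i ≤ D + 1 := le_trans hFu (by omega)
  have h2 : fstar k lam f j ≤ D + 1 := le_trans hFv (by omega)
  omega

/-- telescoping over blocks -/
lemma sum_blocks (F : Fin (k+1) → ℕ)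
    (hK : ∀ i j : Fin (k+1), i ≠ j → 0 < F i → 0 < F j →
      F i + F j ≤ 2 * Nat.dist (i:ℕ) (j:ℕ) + 2 ∧ F j ≤ 2 * Nat.dist (i:ℕ) (j:ℕ)) :
    ∀ Q : Finset (Fin (k+1)), (∀ i ∈ Q, 0 < F i) → ∀ h2 : 2 ≤ Q.card,
      ∑ i ∈ Q, F i ≤
        2 * (((Q.max' (Finset.card_pos.mp (by omega)) : Fin (k+1)) : ℕ) -
             ((Q.min' (Finset.card_pos.mp (by omega)) : Fin (k+1)) : ℕ)) + 2 := by
  intro Q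
  induction Q using Finset.strongInduction with
  | _ Q ih =>
    intro hpos h2
    have hne : Q.Nonempty := Finset.card_pos.mp (by omega)
    set M := Q.max' hne with hM
    set m := Q.min' hne with hm
    have hmM : m < M := Finset.min'_lt_max'_of_card Q (by omega)
    have hMQ : M ∈ Q := Q.max'_mem hne
    have hmQ : m ∈ Q := Q.min'_mem hne
    have hmM' : (m:ℕ) < (M:ℕ) := hmM
    set Q' := Q.erase M with hQ'
    have hss : Q' ⊂ Q := Finset.erase_ssubset hMQ
    have hcard' : Q'.card = Q.card - 1 := Finset.card_erase_of_mem hMQ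
    have hmQ' : m ∈ Q' := Finset.mem_erase.mpr ⟨ne_of_lt hmM, hmQ⟩
    have hsum : ∑ i ∈ Q, F i = ∑ i ∈ Q', F i + F M := by
      rw [hQ', Finset.sum_erase_add Q F hMQ]
    rcases Nat.lt_or_ge Q.card 3 with hc3 | hc3
    · -- card = 2
      have hc2 : Q.card = 2 := by omega
      have hQ2 : ({m, M} : Finset (Fin (k+1))) = Q := by
        apply Finset.eq_of_subset_of_card_le
        · intro x hx
          rw [Finset.mem_insert, Finset.mem_singleton] at hx
          rcases hx with h | h <;> subst h
          · exact hmQ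
          · exact hMQ
        · rw [hc2, Finset.card_insert_of_notMem (by simp [ne_of_lt hmM]),
            Finset.card_singleton]
      rw [← hQ2, Finset.sum_pair (ne_of_lt hmM)]
      have := (hK m M (ne_of_lt hmM) (hpos m hmQ) (hpos M hMQ)).1
      rw [Nat.dist_eq_sub_of_le (le_of_lt hmM')] at this
      omega
    · -- card ≥ 3
      have hc2' : 2 ≤ Q'.card := by omega
      have hne' : Q'.Nonempty := Finset.card_pos.mp (by omega)
      have hpos' : ∀ i ∈ Q', 0 < F i := fun i hi => hpos i (Finset.mem_of_mem_erase hi)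
      have hIH := ih Q' hss hpos' hc2'
      set b := Q'.max' hne' with hb
      set m' := Q'.min' hne' with hm'
      have hbQ : b ∈ Q := Finset.mem_of_mem_erase (Q'.max'_mem hne')
      have hbM : b ≠ M := (Finset.mem_erase.mp (Q'.max'_mem hne')).1
      have hbM' : (b:ℕ) < (M:ℕ) := lt_of_le_of_ne (Q.le_max' b hbQ) (fun h => hbM (Fin.ext h))
      have hmm' : m' = m := by
        apply le_antisymm
        · exact Q'.min'_le m hmQ'
        · exact Q.min'_le m' (Finset.mem_of_mem_erase (Q'.min'_mem hne'))
      have hmb : (m:ℕ) ≤ (b:ℕ) := Q.min'_le b hbQ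
      have hK2 := (hK b M hbM (hpos b hbQ) (hpos M hMQ)).2
      rw [Nat.dist_eq_sub_of_le (le_of_lt hbM')] at hK2
      rw [hmm'] at hIH
      omega

lemma cost_upper (hlam : ∀ i, 1 ≤ lam i ∧ lam i ≤ 2) (f : CatV k lam → ℕ)
    (hf : IsIndepBroadcast (caterpillar k lam) f) : cost f ≤ 2 * k + 2 := by
  classical
  have hcost : cost f = ∑ i : Fin (k+1), fstar k lam f i := by
    unfold cost fstar
    rw [Fintype.sum_sum_type, ← Finset.univ_sigma_univ, Finset.sum_sigma,
      Finset.sum_add_distrib]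
  set F := fstar k lam f with hF
  set P : Finset (Fin (k+1)) := Finset.univ.filter (fun i => 0 < F i) with hP
  have hsumP : ∑ i : Fin (k+1), F i = ∑ i ∈ P, F i := by
    symm
    apply Finset.sum_subset (Finset.subset_univ P)
    intro i _ hi
    simp [hP] at hi
    omega
  rw [hcost, hsumP]
  rcases Nat.lt_or_ge P.card 2 with hc | hc
  · rcases Nat.eq_zero_or_pos P.card with hc0 | hc1
    · rw [Finset.card_eq_zero.mp hc0]; simp
    · have hc1' : P.card = 1 := by omega
      obtain ⟨i, hi⟩ := Finset.card_eq_one.mp hc1'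
      rw [hi, Finset.sum_singleton]
      have hiP : i ∈ P := by rw [hi]; exact Finset.mem_singleton_self i
      have hFi : 0 < F i := by simp [hP] at hiP; exact hiP
      obtain ⟨v, hv, -, hFv⟩ := block_rep hlam f hf i hFi
      have := hf.1 v
      have := ecc_le_k2 (k := k) (lam := lam) v
      have : F i ≤ max (k + 2) 2 := le_trans hFv (by omega)
      omega
  · have hKpair : ∀ i j : Fin (k+1), i ≠ j → 0 < F i → 0 < F j →
        F i + F j ≤ 2 * Nat.dist (i:ℕ) (j:ℕ) + 2 ∧ F j ≤ 2 * Nat.dist (i:ℕ) (j:ℕ) :=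
      fun i j hij hFi hFj => block_pair hlam f hf hij hFi hFj
    have hpos : ∀ i ∈ P, 0 < F i := by intro i hi; simp [hP] at hi; exact hi
    have := sum_blocks F hKpair P hpos hc
    have hMk : ((P.max' (Finset.card_pos.mp (by omega)) : Fin (k+1)) : ℕ) ≤ k :=
      Fin.is_le _
    omega

end UB
end Aux

theorem stmt12 (k : ℕ) (hk : 1 ≤ k) (lam : Fin (k+1) → ℕ)
    (hlam : ∀ i, 1 ≤ lam i ∧ lam i ≤ 2) :
    betaB (caterpillar k lam) = 2 * k + 2 ∧
    2 * k + 2 = 2 * (gdiam (caterpillar k lam) - 1) := by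
  have hgd : gdiam (caterpillar k lam) = k + 2 := gdiam_eq hk (fun i => (hlam i).1)
  constructor
  · unfold betaB
    apply le_antisymm
    · apply csSup_le
      · exact ⟨2 * k + 2, f0 k lam, f0_indep hk, f0_cost (fun i => (hlam i).1)⟩
      · rintro c ⟨f, hf, rfl⟩
        exact cost_upper hlam f hf
    · apply le_csSup
      · exact ⟨2 * k + 2, by rintro c ⟨f, hf, rfl⟩; exact cost_upper hlam f hf⟩
      · exact ⟨f0 k lam, f0_indep hk, f0_cost (fun i => (hlam i).1)⟩
  · rw [hgd]; omega
end
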